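/- (Correctness of teleportation over the anonymously established pair, Step 4 of the anonymous communication protocol.) Work in the 3-qubit space EuclideanSpace ℂ (Fin 3 → ZMod 2) with qubits ordered (s₁, s₂, r), where s₁ carries the message φ = α|0⟩ + β|1⟩ (α, β ∈ ℂ) and (s₂, r) carry the anonymously established pair ψ⁺ = (|01⟩ + |10⟩)/√2. Then applying CNOT with control s₁ and target s₂, followed by Hadamard on s₁, to φ ⊗ ψ⁺ yields exactly (1/2)[ |00⟩ ⊗ Xφ + |01⟩ ⊗ φ + |10⟩ ⊗ XZφ + |11⟩ ⊗ Zφ ]; hence for each Bell outcome (m₀, m₁) the receiver recovers φ by applying the corresponding Pauli correction, and each outcome occurs with probability 1/4 when |α|² + |β|² = 1. -/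

import Mathlib

/-- Amplitude of the EPR pair `ψ⁺ = (|01⟩ + |10⟩)/√2` at bitstring `(b, c)`. -/
noncomputable def eprAmp (b c : ZMod 2) : ℂ :=
  if (b = 0 ∧ c = 1) ∨ (b = 1 ∧ c = 0) then ((1 / Real.sqrt 2 : ℝ) : ℂ) else 0

/-- The joint state `φ ⊗ ψ⁺` with `φ = α|0⟩ + β|1⟩` on qubit `s₁ = 0` and the
pair `ψ⁺` on qubits `(s₂, r) = (1, 2)`. -/
noncomputable def jointState3 (α β : ℂ) : EuclideanSpace ℂ (Fin 3 → ZMod 2) :=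
  WithLp.toLp 2 (fun x => (if x 0 = 0 then α else β) * eprAmp (x 1) (x 2))

/-- CNOT with control qubit `0` and target qubit `1` (a self-inverse basis permutation). -/
noncomputable def cnot01 (ψ : EuclideanSpace ℂ (Fin 3 → ZMod 2)) :
    EuclideanSpace ℂ (Fin 3 → ZMod 2) :=
  WithLp.toLp 2 (fun x => ψ (Function.update x 1 (x 1 + x 0)))

/-- Hadamard gate on qubit `0`. -/
noncomputable def had0 (ψ : EuclideanSpace ℂ (Fin 3 → ZMod 2)) :
    EuclideanSpace ℂ (Fin 3 → ZMod 2) :=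
  WithLp.toLp 2 (fun x => ((1 / Real.sqrt 2 : ℝ) : ℂ) *
    (ψ (Function.update x 0 0) + (if x 0 = 0 then 1 else -1) * ψ (Function.update x 0 1)))

/-- Single-qubit Pauli X on an amplitude function. -/
noncomputable def pX (f : ZMod 2 → ℂ) : ZMod 2 → ℂ := fun b => f (b + 1)

/-- Single-qubit Pauli Z on an amplitude function. -/
noncomputable def pZ (f : ZMod 2 → ℂ) : ZMod 2 → ℂ := fun b => if b = 0 then f b else -f b

/-- The Pauli correction `σ_{m₀m₁}`: `σ₀₀ = X`, `σ₀₁ = I`, `σ₁₀ = XZ`, `σ₁₁ = Z`. -/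
noncomputable def pauliCorr (m0 m1 : ZMod 2) : (ZMod 2 → ℂ) → (ZMod 2 → ℂ) :=
  if m0 = 0 then (if m1 = 0 then pX else id)
  else (if m1 = 0 then pX ∘ pZ else pZ)

/-!
After the CNOT and the Hadamard, the amplitude at `(m₀, m₁, b)` is
`(ψ(0, m₁, b) + (-1)^m₀ ψ(1, m₁ + 1, b)) / √2` with `ψ = φ ⊗ ψ⁺`. Since `ψ⁺` lives on unequal bits,
only one term survives: `α / 2` at `b = m₁ + 1` and `(-1)^m₀ β / 2` at `b = m₁`, which is
`σ_{m₀m₁} φ / 2`. Pauli operators preserve `∑ |·|²`, so each outcome has probability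
`(|α|² + |β|²) / 4 = 1/4`.
-/

lemma ZMod.two_eq_zero_or_one (a : ZMod 2) : a = 0 ∨ a = 1 := by revert a; decide

lemma ZMod.sum_univ_two {M : Type*} [AddCommMonoid M] (f : ZMod 2 → M) :
    ∑ b, f b = f 0 + f 1 :=
  Fin.sum_univ_two f

lemma sum_filter_fin_three_eq {α M : Type*} [Fintype α] [DecidableEq α] [AddCommMonoid M]
    (a b : α) (g : (Fin 3 → α) → M) :
    ∑ x ∈ Finset.univ.filter (fun x : Fin 3 → α => x 0 = a ∧ x 1 = b), g x =
      ∑ c, g ![a, b, c] := by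
  have hinj : Function.Injective (fun c : α => ![a, b, c]) := fun c d h => congrFun h 2
  rw [← Finset.sum_image (fun c _ d _ h => hinj h)]
  congr 1
  ext x
  simp only [Finset.mem_filter, Finset.mem_univ, true_and, Finset.mem_image]
  constructor
  · rintro ⟨rfl, rfl⟩
    exact ⟨x 2, by ext i; fin_cases i <;> rfl⟩
  · rintro ⟨c, rfl⟩
    simp

lemma norm_pZ_apply (f : ZMod 2 → ℂ) (b : ZMod 2) : ‖pZ f b‖ = ‖f b‖ := by
  unfold pZ; split_ifs <;> simp

lemma sum_norm_sq_pX (f : ZMod 2 → ℂ) : ∑ b, ‖pX f b‖ ^ 2 = ∑ b, ‖f b‖ ^ 2 :=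
  Equiv.sum_comp (Equiv.addRight 1) (fun b => ‖f b‖ ^ 2)

lemma sum_norm_sq_pZ (f : ZMod 2 → ℂ) : ∑ b, ‖pZ f b‖ ^ 2 = ∑ b, ‖f b‖ ^ 2 := by
  simp only [norm_pZ_apply]

lemma sum_norm_sq_pauliCorr (m0 m1 : ZMod 2) (f : ZMod 2 → ℂ) :
    ∑ b, ‖pauliCorr m0 m1 f b‖ ^ 2 = ∑ b, ‖f b‖ ^ 2 := by
  unfold pauliCorr
  split_ifs
  · exact sum_norm_sq_pX f
  · rfl
  · exact (sum_norm_sq_pX _).trans (sum_norm_sq_pZ f)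
  · exact sum_norm_sq_pZ f

lemma inv_ofReal_sqrt_two_mul_self :
    ((Real.sqrt 2 : ℝ) : ℂ)⁻¹ * ((Real.sqrt 2 : ℝ) : ℂ)⁻¹ = 2⁻¹ := by
  rw [← mul_inv, ← Complex.ofReal_mul, Real.mul_self_sqrt zero_le_two]
  norm_num

lemma had0_cnot01_jointState3_apply (α β : ℂ) (x : Fin 3 → ZMod 2) :
    had0 (cnot01 (jointState3 α β)) x =
      (1 / 2 : ℂ) * pauliCorr (x 0) (x 1) (fun b => if b = 0 then α else β) (x 2) := by
  rcases ZMod.two_eq_zero_or_one (x 0) with h0 | h0 <;>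
    rcases ZMod.two_eq_zero_or_one (x 1) with h1 | h1 <;>
    rcases ZMod.two_eq_zero_or_one (x 2) with h2 | h2 <;>
    simp [had0, cnot01, jointState3, eprAmp, pauliCorr, pX, pZ, h0, h1, h2,
      show (1 + 1 : ZMod 2) = 0 from rfl] <;>
    rw [mul_left_comm, inv_ofReal_sqrt_two_mul_self, mul_comm]

theorem stmt13 (α β : ℂ) :
    (∀ x : Fin 3 → ZMod 2,
      had0 (cnot01 (jointState3 α β)) x =
        (1 / 2 : ℂ) * pauliCorr (x 0) (x 1) (fun b => if b = 0 then α else β) (x 2)) ∧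
    (‖α‖ ^ 2 + ‖β‖ ^ 2 = 1 →
      ∀ m0 m1 : ZMod 2,
        ∑ x ∈ Finset.univ.filter (fun x : Fin 3 → ZMod 2 => x 0 = m0 ∧ x 1 = m1),
          ‖had0 (cnot01 (jointState3 α β)) x‖ ^ 2 = 1 / 4) := by
  refine ⟨had0_cnot01_jointState3_apply α β, fun hφ m0 m1 => ?_⟩
  rw [sum_filter_fin_three_eq]
  simp only [had0_cnot01_jointState3_apply, norm_mul, mul_pow, ← Finset.mul_sum,
    Matrix.cons_val_zero, Matrix.cons_val_one, Matrix.cons_val_two,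
    Matrix.tail_cons, Matrix.head_cons]
  rw [sum_norm_sq_pauliCorr, ZMod.sum_univ_two]
  norm_num [hφ]
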